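/- arXiv:1406.5060 — 2 statements merged into one kernel-verified Lean document; each statement's English description precedes it below -/
import Mathlib

section
/- Let q be a prime power, N ≥ 3 an integer, A a finite cap in PG(N,q), S a finite set of points of PG(N,q) with S ∩ A = ∅, p ∈ [0,1], and let B be a p-random subset of S. Let v be a point of PG(N,q) with v ∉ A such that no two distinct points of A are collinear with v. Then the probability of the event [v ∈ B, or there exist distinct points w₁, w₂ ∈ A ∪ B, both different from v, such that v, w₁, w₂ are collinear] is at most p + p·|A_S(v)| + p²·|T_S(v)|. -/
/-!
A union bound. If `v` lies on a secant `w₁ w₂` of `A ∪ B`, the two points cannot both lie in `A`,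
so either one of them is a point of `B` in `A_S(v)` or both lie in `B` and form a pair of
`T_S(v)`. A fixed point of `S` lies in `B` with probability at most `p`, a fixed pair with
probability at most `p²`.
-/

open Projectivization MeasureTheory

/-- Three points of a projective space are collinear if their representative vectors span a
linear subspace of dimension at most `2`. -/
def Collin3 {F : Type*} [Field F] {V : Type*} [AddCommGroup V] [Module F V]
    (x y z : Projectivization F V) : Prop :=
  Module.finrank F ↥(x.submodule ⊔ y.submodule ⊔ z.submodule) ≤ 2

/-- A cap is a set of points no three of which are pairwise distinct and collinear. -/
def IsCap {F : Type*} [Field F] {V : Type*} [AddCommGroup V] [Module F V]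
    (A : Set (Projectivization F V)) : Prop :=
  ∀ x ∈ A, ∀ y ∈ A, ∀ z ∈ A, x ≠ y → x ≠ z → y ≠ z → ¬ Collin3 x y z

/-- The Bernoulli measure with parameter `p` on `Bool` (for `p ∈ [0,1]`). -/
noncomputable def bernoulliMeasure (p : ℝ) : Measure Bool :=
  (PMF.bernoulli (min (Real.toNNReal p) 1) (min_le_right _ _)).toMeasure

/-- The law of a `p`-random subset of the finite set `S`: every element of `S` is included
independently with probability `p`. -/
noncomputable def nibbleMeasure {α : Type*} (S : Finset α) (p : ℝ) :
    Measure (↥S → Bool) :=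
  Measure.pi fun _ => bernoulliMeasure p

/-- The random subset of `S` corresponding to the sample `ω`. -/
def chosenSet {α : Type*} (S : Finset α) (ω : ↥S → Bool) : Set α :=
  {x | ∃ h : x ∈ S, ω ⟨x, h⟩ = true}

/-- `A_S(v)`: the points of `S \ {v}` collinear with `v` and some point of `A`. -/
def capCone {F : Type*} [Field F] {V : Type*} [AddCommGroup V] [Module F V]
    (A : Set (Projectivization F V)) (S : Finset (Projectivization F V))
    (v : Projectivization F V) : Set (Projectivization F V) :=
  {x | x ∈ S ∧ x ≠ v ∧ ∃ u ∈ A, v ≠ x ∧ v ≠ u ∧ x ≠ u ∧ Collin3 v x u}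

/-- `T_S(v)`: the unordered pairs of distinct points of `S \ {v}` collinear with `v`. -/
def pairCone {F : Type*} [Field F] {V : Type*} [AddCommGroup V] [Module F V]
    (S : Finset (Projectivization F V)) (v : Projectivization F V) :
    Set (Sym2 (Projectivization F V)) :=
  {s | ∃ x y, s = s(x, y) ∧ x ≠ y ∧ x ∈ S ∧ x ≠ v ∧ y ∈ S ∧ y ≠ v ∧ Collin3 v x y}

section Nibble

variable {α : Type*} (S : Finset α) (p : ℝ)

lemma bernoulliMeasure_true_le : bernoulliMeasure p {true} ≤ ENNReal.ofReal p := by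
  rw [bernoulliMeasure, PMF.toMeasure_apply_singleton _ _ (measurableSet_singleton _),
    ENNReal.ofReal]
  exact ENNReal.coe_le_coe.mpr (min_le_left _ _)

instance bernoulliMeasure.instIsProbabilityMeasure :
    IsProbabilityMeasure (bernoulliMeasure p) := by
  rw [bernoulliMeasure]; infer_instance

lemma nibbleMeasure_subset_chosenSet_le (T : Finset α) :
    nibbleMeasure S p {ω | (T : Set α) ⊆ chosenSet S ω} ≤ ENNReal.ofReal p ^ T.card := by
  classical
  by_cases hTS : T ⊆ S
  · have hevent : {ω | (T : Set α) ⊆ chosenSet S ω} =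
        (T.subtype (· ∈ S) : Set ↥S).pi fun _ => {true} := by
      ext ω
      simp only [chosenSet, Set.subset_def, Finset.mem_coe, Set.mem_ofPred_eq, Set.mem_pi,
        Finset.mem_subtype, Set.mem_singleton_iff, Subtype.forall]
      exact ⟨fun h x _ hxT => (h x hxT).2, fun h x hxT => ⟨hTS hxT, h x _ hxT⟩⟩
    rw [hevent, nibbleMeasure, Measure.pi_pi_finset, Finset.prod_const, Finset.card_subtype,
      Finset.filter_true_of_mem hTS]
    exact pow_le_pow_left₀ zero_le (bernoulliMeasure_true_le p) _
  · obtain ⟨x, hxT, hxS⟩ := Finset.not_subset.mp hTS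
    have hevent : {ω | (T : Set α) ⊆ chosenSet S ω} = ∅ :=
      Set.eq_empty_of_forall_notMem fun ω hω => hxS (hω hxT).1
    simp [hevent]

lemma nibbleMeasure_mem_chosenSet_le (x : α) :
    nibbleMeasure S p {ω | x ∈ chosenSet S ω} ≤ ENNReal.ofReal p := by
  simpa using nibbleMeasure_subset_chosenSet_le S p {x}

lemma nibbleMeasure_sym2_subset_chosenSet_le {z : Sym2 α} (hz : ¬ z.IsDiag) :
    nibbleMeasure S p {ω | ∀ x ∈ z, x ∈ chosenSet S ω} ≤ ENNReal.ofReal p ^ 2 := by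
  classical
  induction z using Sym2.ind with
  | h x y =>
    have hxy : x ≠ y := by simpa using hz
    simpa [Finset.card_pair hxy, Set.insert_subset_iff] using
      nibbleMeasure_subset_chosenSet_le S p {x, y}

end Nibble

lemma measure_biUnion_le_ncard_mul {α ι : Type*} [MeasurableSpace α] (μ : Measure α)
    {I : Set ι} (hI : I.Finite) {s : ι → Set α} {c : ENNReal} (h : ∀ i ∈ I, μ (s i) ≤ c) :
    μ (⋃ i ∈ I, s i) ≤ I.ncard * c := by
  rw [← hI.coe_toFinset, Set.ncard_coe_finset]
  calc μ (⋃ i ∈ hI.toFinset, s i) ≤ ∑ i ∈ hI.toFinset, μ (s i) := measure_biUnion_finset_le _ _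
    _ ≤ ∑ _i ∈ hI.toFinset, c := Finset.sum_le_sum fun i hi => h i (hI.mem_toFinset.mp hi)
    _ = hI.toFinset.card * c := by rw [Finset.sum_const, nsmul_eq_mul]

section Cones

open scoped LinearAlgebra.Projectivization

variable {F : Type*} [Field F] {V : Type*} [AddCommGroup V] [Module F V]

lemma Collin3.swap_right {x y z : ℙ F V} (h : Collin3 x y z) : Collin3 x z y := by
  rwa [Collin3, sup_right_comm]

lemma capCone_finite (A : Set (ℙ F V)) (S : Finset (ℙ F V)) (v : ℙ F V) :
    (capCone A S v).Finite :=
  S.finite_toSet.subset fun _ hx => hx.1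

lemma pairCone_finite (S : Finset (ℙ F V)) (v : ℙ F V) : (pairCone S v).Finite := by
  refine S.sym2.finite_toSet.subset ?_
  rintro _ ⟨x, y, rfl, -, hxS, -, hyS, -, -⟩
  simp [hxS, hyS]

lemma not_isDiag_of_mem_pairCone {S : Finset (ℙ F V)} {v : ℙ F V} {z : Sym2 (ℙ F V)}
    (hz : z ∈ pairCone S v) : ¬ z.IsDiag := by
  obtain ⟨x, y, rfl, hxy, -⟩ := hz
  simpa using hxy

lemma exists_mem_capCone_or_pairCone {A B : Set (ℙ F V)} {S : Finset (ℙ F V)} {v : ℙ F V}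
    (hBS : B ⊆ S) (hv : ∀ w₁ ∈ A, ∀ w₂ ∈ A, w₁ ≠ w₂ → ¬ Collin3 v w₁ w₂)
    {w₁ w₂ : ℙ F V} (h₁ : w₁ ∈ A ∪ B) (h₂ : w₂ ∈ A ∪ B) (hne : w₁ ≠ w₂) (h₁v : w₁ ≠ v)
    (h₂v : w₂ ≠ v) (hcol : Collin3 v w₁ w₂) :
    (∃ x ∈ capCone A S v, x ∈ B) ∨ ∃ z ∈ pairCone S v, ∀ x ∈ z, x ∈ B := by
  rcases h₁ with hA₁ | hB₁ <;> rcases h₂ with hA₂ | hB₂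
  · exact absurd hcol (hv _ hA₁ _ hA₂ hne)
  · exact .inl ⟨w₂, ⟨hBS hB₂, h₂v, w₁, hA₁, h₂v.symm, h₁v.symm, hne.symm, hcol.swap_right⟩, hB₂⟩
  · exact .inl ⟨w₁, ⟨hBS hB₁, h₁v, w₂, hA₂, h₁v.symm, h₂v.symm, hne, hcol⟩, hB₁⟩
  · refine .inr ⟨s(w₁, w₂), ⟨w₁, w₂, rfl, hne, hBS hB₁, h₁v, hBS hB₂, h₂v, hcol⟩, ?_⟩
    intro x hx
    rcases Sym2.mem_iff.mp hx with rfl | rfl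
    exacts [hB₁, hB₂]

lemma secantEvent_subset_union {A : Set (ℙ F V)} {S : Finset (ℙ F V)} {v : ℙ F V}
    (hv : ∀ w₁ ∈ A, ∀ w₂ ∈ A, w₁ ≠ w₂ → ¬ Collin3 v w₁ w₂) :
    {ω | v ∈ chosenSet S ω ∨ ∃ w₁ w₂, (w₁ ∈ A ∪ chosenSet S ω) ∧ (w₂ ∈ A ∪ chosenSet S ω) ∧
        w₁ ≠ w₂ ∧ w₁ ≠ v ∧ w₂ ≠ v ∧ Collin3 v w₁ w₂} ⊆
      {ω | v ∈ chosenSet S ω} ∪ (⋃ x ∈ capCone A S v, {ω | x ∈ chosenSet S ω}) ∪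
        ⋃ z ∈ pairCone S v, {ω | ∀ x ∈ z, x ∈ chosenSet S ω} := by
  rintro ω (hvB | ⟨w₁, w₂, h₁, h₂, hne, h₁v, h₂v, hcol⟩)
  · exact .inl (.inl hvB)
  rcases exists_mem_capCone_or_pairCone (fun x hx => hx.1) hv h₁ h₂ hne h₁v h₂v hcol with
    ⟨x, hx, hxB⟩ | ⟨z, hz, hzB⟩
  · exact .inl (.inr (Set.mem_biUnion hx hxB))
  · exact .inr (Set.mem_biUnion hz hzB)

end Cones

theorem deletion_probability_upper_bound_general
    (F : Type) [Field F] (N : ℕ)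
    (A : Finset (Projectivization F (Fin (N + 1) → F)))
    (S : Finset (Projectivization F (Fin (N + 1) → F)))
    (p : ℝ) (hp0 : 0 ≤ p)
    (v : Projectivization F (Fin (N + 1) → F))
    (hv : ∀ w₁ ∈ A, ∀ w₂ ∈ A, w₁ ≠ w₂ → ¬ Collin3 v w₁ w₂) :
    nibbleMeasure S p
      {ω | v ∈ chosenSet S ω ∨
        ∃ w₁ w₂, (w₁ ∈ (A : Set _) ∪ chosenSet S ω) ∧ (w₂ ∈ (A : Set _) ∪ chosenSet S ω) ∧
          w₁ ≠ w₂ ∧ w₁ ≠ v ∧ w₂ ≠ v ∧ Collin3 v w₁ w₂} ≤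
    ENNReal.ofReal (p + p * ((capCone (A : Set _) S v).ncard : ℝ) +
      p ^ 2 * ((pairCone S v).ncard : ℝ)) := by
  set μ := nibbleMeasure S p
  calc μ _ ≤ μ {ω | v ∈ chosenSet S ω} +
        μ (⋃ x ∈ capCone (A : Set _) S v, {ω | x ∈ chosenSet S ω}) +
        μ (⋃ z ∈ pairCone S v, {ω | ∀ x ∈ z, x ∈ chosenSet S ω}) :=
      (measure_mono (secantEvent_subset_union hv)).trans <|
        (measure_union_le _ _).trans (add_le_add_left (measure_union_le _ _) _)
    _ ≤ ENNReal.ofReal p + (capCone (A : Set _) S v).ncard * ENNReal.ofReal p +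
        (pairCone S v).ncard * ENNReal.ofReal p ^ 2 := by
      gcongr
      · exact nibbleMeasure_mem_chosenSet_le S p v
      · exact measure_biUnion_le_ncard_mul μ (capCone_finite _ S v) fun x _ =>
          nibbleMeasure_mem_chosenSet_le S p x
      · exact measure_biUnion_le_ncard_mul μ (pairCone_finite S v) fun z hz =>
          nibbleMeasure_sym2_subset_chosenSet_le S p (not_isDiag_of_mem_pairCone hz)
    _ = _ := by
      rw [ENNReal.ofReal_add (by positivity) (by positivity),
        ENNReal.ofReal_add hp0 (by positivity),
        ENNReal.ofReal_mul hp0, ENNReal.ofReal_mul (by positivity), ENNReal.ofReal_pow hp0,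
        ENNReal.ofReal_natCast, ENNReal.ofReal_natCast]
      ring

/-- Upper bound for the probability that a point `v`, not covered by the cap `A`, either is
chosen in the nibble `B` or lies on a bisecant of `A ∪ B`. -/
theorem deletion_probability_upper_bound
    (F : Type) [Field F] [Fintype F] (N : ℕ) (hN : 3 ≤ N)
    (A : Finset (Projectivization F (Fin (N + 1) → F)))
    (hA : IsCap (A : Set (Projectivization F (Fin (N + 1) → F))))
    (S : Finset (Projectivization F (Fin (N + 1) → F)))
    (hSA : (S : Set (Projectivization F (Fin (N + 1) → F))) ∩ A = ∅)
    (p : ℝ) (hp0 : 0 ≤ p) (hp1 : p ≤ 1)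
    (v : Projectivization F (Fin (N + 1) → F)) (hvA : v ∉ A)
    (hv : ∀ w₁ ∈ A, ∀ w₂ ∈ A, w₁ ≠ w₂ → ¬ Collin3 v w₁ w₂) :
    nibbleMeasure S p
      {ω | v ∈ chosenSet S ω ∨
        ∃ w₁ w₂, (w₁ ∈ (A : Set _) ∪ chosenSet S ω) ∧ (w₂ ∈ (A : Set _) ∪ chosenSet S ω) ∧
          w₁ ≠ w₂ ∧ w₁ ≠ v ∧ w₂ ≠ v ∧ Collin3 v w₁ w₂} ≤
    ENNReal.ofReal (p + p * ((capCone (A : Set _) S v).ncard : ℝ) +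
      p ^ 2 * ((pairCone S v).ncard : ℝ)) :=
  deletion_probability_upper_bound_general F N A S p hp0 v hv
end

section
/- Fix an integer N ≥ 3. There exists M such that for every real number q ≥ M the following holds. Set θ = (log q)^{-2} and L = ⌈√(6N) · (log q)^{5/2}⌉. Let (P^ℓ_i)_{1 ≤ i ≤ L} and (P^u_i)_{1 ≤ i ≤ L} be real numbers with 0 ≤ P^ℓ_i ≤ P^u_i < 1, P^ℓ_i ≥ (1/2)·i·θ², and P^u_i ≤ 2·i·θ² for all 1 ≤ i ≤ L. Define b_0 = 1 and b_i = ∏_{j=1}^{i} (1 − P^u_j) for 1 ≤ i ≤ L. Then there exists an index K with 1 ≤ K ≤ L such that b_K ≤ q^{−(N+1)/2} · (log q)^{300} < b_{K−1}, and any such K satisfies √(N/6) · (log q)^{5/2} < K < √(6N) · (log q)^{5/2}. -/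
/-!
Since `1 - P ≤ exp (-P)`, and `exp (-2P) ≤ 1 - P` for `0 ≤ P ≤ 1/2`, the bounds
`iθ²/2 ≤ P_i ≤ 2iθ²` sandwich `b_i` between `exp (-2θ² i(i+1))` and `exp (-θ² i(i+1)/4)`.
With `ℓ = log q` we have `θ² = ℓ⁻⁴` and the threshold is `exp (-((N+1)ℓ/2 - 300 log ℓ))`,
so a crossing step `K` has `K² ≍ Nℓ⁵`; the constants `1/6` and `6` absorb the `log ℓ` term
and the rounding of `L`.
-/

/-- `θ = (log q)^{-2}`. -/
noncomputable def nibbleTheta (q : ℝ) : ℝ := (Real.log q ^ 2)⁻¹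

/-- `L = ⌈√(6N) (log q)^{5/2}⌉`. -/
noncomputable def nibbleL (N : ℕ) (q : ℝ) : ℕ :=
  ⌈Real.sqrt (6 * N) * Real.log q ^ ((5 : ℝ) / 2)⌉₊

/-- `b_i = ∏_{j=1}^{i} (1 - Pu j)` (so `b_0 = 1`). -/
noncomputable def nibbleB (Pu : ℕ → ℝ) (i : ℕ) : ℝ :=
  ∏ j ∈ Finset.Icc 1 i, (1 - Pu j)

/-- The stopping threshold `q^{-(N+1)/2} (log q)^{300}`. -/
noncomputable def nibbleThr (N : ℕ) (q : ℝ) : ℝ :=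
  q ^ (-(((N : ℝ) + 1) / 2)) * Real.log q ^ (300 : ℕ)

open Real Finset Filter

lemma sum_Icc_natCast (i : ℕ) : ∑ j ∈ Icc 1 i, (j : ℝ) = i * (i + 1) / 2 := by
  induction i with
  | zero => simp
  | succ n ih =>
    rw [sum_Icc_succ_top (by omega), ih]
    push_cast
    ring

lemma prod_Icc_exp_neg_mul (c : ℝ) (i : ℕ) :
    ∏ j ∈ Icc 1 i, exp (-(c * j)) = exp (-(c * (i * (i + 1) / 2))) := by
  rw [← exp_sum, ← sum_Icc_natCast, mul_sum, sum_neg_distrib]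

lemma exp_neg_two_mul_le_one_sub {x : ℝ} (h0 : 0 ≤ x) (h : x ≤ 1 / 2) :
    exp (-(2 * x)) ≤ 1 - x := by
  have hx : 0 < 1 - x := by linarith
  have hinv : (1 - x)⁻¹ ≤ 1 + 2 * x := by
    rw [inv_le_iff_one_le_mul₀' hx]
    nlinarith
  calc exp (-(2 * x)) ≤ exp (log (1 - x)) := by
        gcongr
        linarith [one_sub_inv_le_log_of_pos hx]
    _ = 1 - x := exp_log hx

lemma nibbleB_le_exp {Pu : ℕ → ℝ} {c : ℝ} {i : ℕ}
    (h : ∀ j ∈ Icc 1 i, c * j ≤ Pu j ∧ Pu j ≤ 1) :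
    nibbleB Pu i ≤ exp (-(c / 2 * (i * (i + 1)))) := by
  have hprod := prod_Icc_exp_neg_mul c i
  rw [show c * (i * (i + 1) / 2 : ℝ) = c / 2 * (i * (i + 1)) by ring] at hprod
  rw [nibbleB, ← hprod]
  refine prod_le_prod (fun j hj => sub_nonneg.2 (h j hj).2) fun j hj => ?_
  calc 1 - Pu j ≤ 1 - c * j := by linarith [(h j hj).1]
    _ ≤ exp (-(c * j)) := one_sub_le_exp_neg _

lemma exp_le_nibbleB {Pu : ℕ → ℝ} {c : ℝ} {i : ℕ}
    (h : ∀ j ∈ Icc 1 i, 0 ≤ Pu j ∧ Pu j ≤ 1 / 2 ∧ Pu j ≤ c * j) :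
    exp (-(c * (i * (i + 1)))) ≤ nibbleB Pu i := by
  have hprod := prod_Icc_exp_neg_mul (2 * c) i
  rw [show 2 * c * (i * (i + 1) / 2 : ℝ) = c * (i * (i + 1)) by ring] at hprod
  rw [nibbleB, ← hprod]
  refine prod_le_prod (fun j _ => (exp_pos _).le) fun j hj => ?_
  obtain ⟨h0, hhalf, hc⟩ := h j hj
  calc exp (-(2 * c * j)) ≤ exp (-(2 * Pu j)) := exp_le_exp.2 (by linarith)
    _ ≤ 1 - Pu j := exp_neg_two_mul_le_one_sub h0 hhalf

lemma nibbleB_sandwich {Pu : ℕ → ℝ} {T : ℝ} {L i : ℕ} (hT : 0 ≤ T) (hTL : 4 * T * L ≤ 1)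
    (hP : ∀ j, 1 ≤ j → j ≤ L → 1 / 2 * j * T ≤ Pu j ∧ Pu j ≤ 2 * j * T) (hi : i ≤ L) :
    exp (-(2 * T * (i * (i + 1)))) ≤ nibbleB Pu i ∧
      nibbleB Pu i ≤ exp (-(T / 4 * (i * (i + 1)))) := by
  have hPi : ∀ j ∈ Icc 1 i, 1 / 2 * j * T ≤ Pu j ∧ Pu j ≤ 2 * j * T ∧ (j : ℝ) ≤ L := by
    intro j hj
    rw [mem_Icc] at hj
    have hjL : j ≤ L := hj.2.trans hi
    exact ⟨(hP j hj.1 hjL).1, (hP j hj.1 hjL).2, by exact_mod_cast hjL⟩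
  constructor
  · refine exp_le_nibbleB fun j hj => ?_
    obtain ⟨hlo, hhi, hjL⟩ := hPi j hj
    exact ⟨by nlinarith, by nlinarith, by linarith⟩
  · convert nibbleB_le_exp (c := T / 2) fun j hj => ?_ using 4
    · ring
    obtain ⟨hlo, hhi, hjL⟩ := hPi j hj
    exact ⟨by linarith, by nlinarith⟩

def IsThresholdCrossing (b : ℕ → ℝ) (θ : ℝ) (L K : ℕ) : Prop :=
  1 ≤ K ∧ K ≤ L ∧ b K ≤ θ ∧ θ < b (K - 1)

lemma exists_isThresholdCrossing {b : ℕ → ℝ} {θ : ℝ} {L : ℕ} (h0 : θ < b 0) (hL : b L ≤ θ) :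
    ∃ K, IsThresholdCrossing b θ L K := by
  classical
  have hex : ∃ k, b k ≤ θ := ⟨L, hL⟩
  have hpos : 0 < Nat.find hex :=
    Nat.pos_of_ne_zero fun h => (Nat.find_spec hex).not_gt (h ▸ h0)
  exact ⟨Nat.find hex, hpos, Nat.find_min' hex hL, Nat.find_spec hex,
    lt_of_not_ge (Nat.find_min hex (by omega))⟩

theorem isThresholdCrossing_bounds {b : ℕ → ℝ} {α β E x y : ℝ} {L : ℕ} (hα : 0 ≤ α) (hβ : 0 ≤ β)
    (hb : ∀ i ≤ L, exp (-(α * (i * (i + 1)))) ≤ b i ∧ b i ≤ exp (-(β * (i * (i + 1)))))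
    (hb0 : b 0 = 1) (hE : 0 < E) (hx : 0 ≤ x) (hxE : α * (x * (x + 1)) < E)
    (hy : 1 ≤ y) (hyL : y ≤ L) (hyE : E ≤ β * ((y - 1) * y)) :
    (∃ K, IsThresholdCrossing b (exp (-E)) L K) ∧
      ∀ K, IsThresholdCrossing b (exp (-E)) L K → x < K ∧ K < y := by
  constructor
  · refine exists_isThresholdCrossing (by simpa [hb0] using hE)
      ((hb L le_rfl).2.trans (exp_le_exp.2 (neg_le_neg (hyE.trans ?_))))
    gcongr <;> linarith
  · rintro K ⟨hK1, hKL, hbK, hbK'⟩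
    have hlo := exp_le_exp.1 ((hb K hKL).1.trans hbK)
    have hhi := exp_lt_exp.1 (hbK'.trans_le (hb (K - 1) (by omega)).2)
    rw [Nat.cast_sub hK1, Nat.cast_one, sub_add_cancel] at hhi
    constructor
    · by_contra! hKx
      have : α * (K * (K + 1)) ≤ α * (x * (x + 1)) := by gcongr
      linarith
    · by_contra! hKy
      have : β * ((y - 1) * y) ≤ β * ((K - 1) * K) := by gcongr; linarith
      linarith

noncomputable def nibbleExponent (N : ℕ) (ℓ : ℝ) : ℝ :=
  ℓ * (((N : ℝ) + 1) / 2) - 300 * log ℓ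

lemma nibbleThr_eq_exp {N : ℕ} {q : ℝ} (hq : 1 < q) :
    nibbleThr N q = exp (-nibbleExponent N (log q)) := by
  have hlog : 0 < log q := log_pos hq
  rw [nibbleThr, rpow_def_of_pos (by linarith), ← exp_log (pow_pos hlog 300), ← exp_add,
    log_pow, nibbleExponent]
  push_cast
  ring_nf

lemma inv_pow_four_mul_rpow_five_halves_sq {ℓ : ℝ} (hℓ : 0 < ℓ) :
    (ℓ ^ 4)⁻¹ * (ℓ ^ ((5 : ℝ) / 2)) ^ 2 = ℓ := by
  rw [← rpow_mul_natCast hℓ.le]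
  norm_num
  field_simp

theorem nibbleB_crossing_of_log {N : ℕ} (hN : 3 ≤ N) {ℓ : ℝ} (hℓ : 1 ≤ ℓ)
    (hlog : 300 * log ℓ + 1 < ℓ) (hpow : 4 * (√(6 * N) * ℓ ^ ((5 : ℝ) / 2) + 1) ≤ ℓ ^ 4)
    {Pu : ℕ → ℝ} (hP : ∀ i : ℕ, 1 ≤ i → i ≤ ⌈√(6 * N) * ℓ ^ ((5 : ℝ) / 2)⌉₊ →
      1 / 2 * (i : ℝ) * (ℓ ^ 4)⁻¹ ≤ Pu i ∧ Pu i ≤ 2 * (i : ℝ) * (ℓ ^ 4)⁻¹) :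
    (∃ K, IsThresholdCrossing (nibbleB Pu) (exp (-nibbleExponent N ℓ))
      ⌈√(6 * N) * ℓ ^ ((5 : ℝ) / 2)⌉₊ K) ∧
    ∀ K, IsThresholdCrossing (nibbleB Pu) (exp (-nibbleExponent N ℓ))
      ⌈√(6 * N) * ℓ ^ ((5 : ℝ) / 2)⌉₊ K →
        √(N / 6) * ℓ ^ ((5 : ℝ) / 2) < K ∧ (K : ℝ) < √(6 * N) * ℓ ^ ((5 : ℝ) / 2) := by
  have hℓ0 : 0 < ℓ := by linarith
  have hlogℓ : 0 ≤ log ℓ := log_nonneg hℓ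
  have hNR : (3 : ℝ) ≤ N := by exact_mod_cast hN
  set A := ℓ ^ ((5 : ℝ) / 2)
  set T := (ℓ ^ 4)⁻¹ with hT
  set s := √(6 * N)
  set t := √(N / 6)
  have hA1 : 1 ≤ A := one_le_rpow hℓ (by norm_num)
  have hTA : T * A ^ 2 = ℓ := inv_pow_four_mul_rpow_five_halves_sq hℓ0
  have hs : 4 ≤ s := le_sqrt_of_sq_le (by linarith)
  have hts : t ≤ s := sqrt_le_sqrt (by linarith)
  have hTsA : T * (s * A) ≤ 1 / 4 := by
    rw [hT, inv_mul_le_iff₀ (by positivity)]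
    linarith
  have hTL : 4 * T * ⌈s * A⌉₊ ≤ 1 := by
    have hL := Nat.ceil_lt_add_one (by positivity : 0 ≤ s * A)
    rw [hT, mul_comm 4, mul_assoc, inv_mul_le_iff₀ (by positivity)]
    linarith
  refine isThresholdCrossing_bounds (x := t * A) (y := s * A) (by positivity) (by positivity)
    (fun i hi => nibbleB_sandwich (by positivity) hTL hP hi) (by simp [nibbleB]) ?_
    (by positivity) ?_ (by nlinarith) (Nat.le_ceil _) ?_
  · rw [nibbleExponent]
    nlinarith
  · have htA : 2 * T * (t * A * (t * A + 1)) = N / 3 * ℓ + 2 * (T * (t * A)) := by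
      rw [show 2 * T * (t * A * (t * A + 1)) = 2 * t ^ 2 * (T * A ^ 2) + 2 * (T * (t * A)) by ring,
        hTA, sq_sqrt (by positivity)]
      ring
    have : T * (t * A) ≤ T * (s * A) := by gcongr
    rw [htA, nibbleExponent]
    nlinarith
  · have hsA : T / 4 * ((s * A - 1) * (s * A)) = 3 / 2 * N * ℓ - T * (s * A) / 4 := by
      rw [show T / 4 * ((s * A - 1) * (s * A)) = s ^ 2 / 4 * (T * A ^ 2) - T * (s * A) / 4 by ring,
        hTA, sq_sqrt (by positivity)]
      ring
    rw [hsA, nibbleExponent]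
    nlinarith

lemma eventually_mul_log_add_lt (c d : ℝ) : ∀ᶠ x : ℝ in atTop, c * log x + d < x := by
  have h := ((isLittleO_log_id_atTop.const_mul_left c).add
    (Asymptotics.isLittleO_const_id_atTop d)).bound one_half_pos
  filter_upwards [h, eventually_gt_atTop 0] with x hx hx0
  simp only [id, norm_eq_abs, abs_of_pos hx0] at hx
  linarith [le_abs_self (c * log x + d)]

lemma eventually_rpow_five_halves_le_pow_four (C : ℝ) :
    ∀ᶠ x : ℝ in atTop, 4 * (C * x ^ ((5 : ℝ) / 2) + 1) ≤ x ^ 4 := by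
  filter_upwards [eventually_ge_atTop 1,
    (tendsto_rpow_atTop (by norm_num : (0 : ℝ) < 3 / 2)).eventually_ge_atTop (4 * |C| + 4)]
    with x hx1 hx
  have hsplit : x ^ 4 = x ^ ((3 : ℝ) / 2) * x ^ ((5 : ℝ) / 2) := by
    rw [← rpow_add (by linarith), ← rpow_natCast]
    norm_num
  have hA : 1 ≤ x ^ ((5 : ℝ) / 2) := one_le_rpow hx1 (by norm_num)
  rw [hsplit]
  nlinarith [le_abs_self C]

/-- The number of steps of the nibble algorithm: there is a first index `K` at which `b_K`
drops below the threshold, and any such `K` is `Θ((log q)^{5/2})` with explicit constants. -/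
theorem nibble_number_of_steps (N : ℕ) (hN : 3 ≤ N) :
    ∃ M : ℝ, ∀ q : ℝ, M ≤ q →
      ∀ Pl Pu : ℕ → ℝ,
        (∀ i : ℕ, 1 ≤ i → i ≤ nibbleL N q →
          0 ≤ Pl i ∧ Pl i ≤ Pu i ∧ Pu i < 1 ∧
          (1 / 2) * (i : ℝ) * nibbleTheta q ^ 2 ≤ Pl i ∧
          Pu i ≤ 2 * (i : ℝ) * nibbleTheta q ^ 2) →
        (∃ K : ℕ, 1 ≤ K ∧ K ≤ nibbleL N q ∧
          nibbleB Pu K ≤ nibbleThr N q ∧ nibbleThr N q < nibbleB Pu (K - 1)) ∧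
        (∀ K : ℕ, 1 ≤ K → K ≤ nibbleL N q →
          nibbleB Pu K ≤ nibbleThr N q → nibbleThr N q < nibbleB Pu (K - 1) →
          Real.sqrt ((N : ℝ) / 6) * Real.log q ^ ((5 : ℝ) / 2) < (K : ℝ) ∧
          (K : ℝ) < Real.sqrt (6 * N) * Real.log q ^ ((5 : ℝ) / 2)) := by
  have hlarge := (eventually_gt_atTop 1).and <| tendsto_log_atTop.eventually <|
    (eventually_ge_atTop 1).and <|
      (eventually_mul_log_add_lt 300 1).and (eventually_rpow_five_halves_le_pow_four √(6 * N))
  obtain ⟨M, hM⟩ := eventually_atTop.1 hlarge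
  refine ⟨M, fun q hq Pl Pu hP => ?_⟩
  obtain ⟨hq1, hℓ, hlog, hpow⟩ := hM q hq
  have hθ : nibbleTheta q ^ 2 = (log q ^ 4)⁻¹ := by rw [nibbleTheta, inv_pow, ← pow_mul]
  have hPu : ∀ i : ℕ, 1 ≤ i → i ≤ nibbleL N q →
      1 / 2 * (i : ℝ) * (log q ^ 4)⁻¹ ≤ Pu i ∧ Pu i ≤ 2 * (i : ℝ) * (log q ^ 4)⁻¹ := by
    intro i hi hiL
    obtain ⟨-, hlu, -, hl, hu⟩ := hP i hi hiL
    rw [hθ] at hl hu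
    exact ⟨hl.trans hlu, hu⟩
  obtain ⟨hex, hbounds⟩ := nibbleB_crossing_of_log hN hℓ hlog hpow hPu
  rw [nibbleThr_eq_exp hq1]
  exact ⟨hex, fun K h1 h2 h3 h4 => hbounds K ⟨h1, h2, h3, h4⟩⟩
end
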